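/- arXiv:2503.10169 — 2 statements merged into one kernel-verified Lean document; each statement's English description precedes it below -/
import Mathlib

section
/- Let T be a leaf-ordered rooted binary tree on n leaves, and let e be an internal edge of T whose endpoints have canonical labels −k (the upper endpoint, closer to the root) and −j (the lower endpoint). If T′ is obtained from T by an NNI move across e such that in T′ the upper endpoint of the modified edge has canonical label −j instead of −k, then d_OLA(T, T′) ≤ 1 + c_k, where c_k denotes the number of entries equal to −k in the OLA encoding of T. -/
/-- A rooted binary tree whose leaves carry natural-number labels. -/
inductive BTree : Type
  | leaf : ℕ → BTree
  | node : BTree → BTree → BTree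
  deriving DecidableEq

namespace BTree

/-- The minimum leaf label in a tree (the "clade-founder" label of its root). -/
def minLeaf : BTree → ℕ
  | leaf j => j
  | node l r => min (minLeaf l) (minLeaf r)

/-- The label of the root node of a subtree: a leaf carries its own label,
and an internal node carries its canonical label `-CS`, where `CS` is the
"clade-splitter" label, i.e. the maximum of the children's clade-founder labels. -/
def nodeLabel : BTree → ℤ
  | leaf j => (j : ℤ)
  | node l r => -(max (minLeaf l) (minLeaf r) : ℤ)

/-- The multiset of leaf labels of a tree. -/
def leafMultiset : BTree → Multiset ℕ
  | leaf j => {j}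
  | node l r => leafMultiset l + leafMultiset r

/-- Canonical form for representing an *unordered* tree by an ordered one:
at each internal node the left subtree contains the smaller minimum leaf label. -/
def Canonical : BTree → Prop
  | leaf _ => True
  | node l r => minLeaf l < minLeaf r ∧ Canonical l ∧ Canonical r

/-- `IsRBT n T` : `T` is (the canonical representative of) a leaf-ordered rooted
binary tree on `n` leaves, bijectively labeled `0, 1, ..., n-1`. -/
def IsRBT (n : ℕ) (T : BTree) : Prop :=
  Canonical T ∧ leafMultiset T = Multiset.range n

/-- Number of leaves. -/
def numLeaves : BTree → ℕ
  | leaf _ => 1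
  | node l r => numLeaves l + numLeaves r

/-- Delete the leaf labeled `i` (together with its parent); return the label of
its sister node together with the remaining tree. -/
def deleteLeaf (i : ℕ) : BTree → Option (ℤ × BTree)
  | leaf _ => none
  | node l r =>
    if l = leaf i then some (nodeLabel r, r)
    else if r = leaf i then some (nodeLabel l, l)
    else
      match deleteLeaf i l with
      | some (a, l') => some (a, node l' r)
      | none =>
        match deleteLeaf i r with
        | some (a, r') => some (a, node l r')
        | none => none

/-- Deconstruct a tree by removing leaves `m, m-1, ..., 1` in reverse order,
recording the (leaf or canonical internal) label of the sister of each removed leaf. -/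
def olaEncodeAux : ℕ → BTree → List ℤ
  | 0, _ => []
  | m + 1, T =>
    match deleteLeaf (m + 1) T with
    | some (a, T') => olaEncodeAux m T' ++ [a]
    | none => []

/-- The OLA (ordered leaf attachment) encoding `(a_1, ..., a_{n-1})` of a tree on
`n` leaves: `a_i` is the label of the node that is the sister of leaf `i` at the
step when leaf `i` is attached. -/
def olaEncode (T : BTree) : List ℤ := olaEncodeAux (numLeaves T - 1) T

/-- Attach a new leaf labeled `i` as the sister of the node whose label is `a`
(subdividing that node's parent edge). -/
def attachAt (a : ℤ) (i : ℕ) : BTree → BTree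
  | leaf j => if (j : ℤ) = a then node (leaf j) (leaf i) else leaf j
  | node l r =>
    if nodeLabel (node l r) = a then node (node l r) (leaf i)
    else node (attachAt a i l) (attachAt a i r)

/-- Helper for OLA decoding: attach leaves `i, i+1, ...` at the recorded labels. -/
def olaDecodeAux : BTree → ℕ → List ℤ → BTree
  | T, _, [] => T
  | T, i, a :: rest => olaDecodeAux (attachAt a i T) (i + 1) rest

/-- The OLA decoding: starting from the single leaf `0`, attach leaf `i` as the
sister of the node labeled `a_i`, for `i = 1, ..., n-1`. -/
def olaDecode (v : List ℤ) : BTree := olaDecodeAux (leaf 0) 1 v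

end BTree

/-- `ValidCode v` : membership of `v = (a_1, ..., a_m)` in `C_m`, i.e. the entry
`a_i` (at list index `i - 1`) satisfies `-i < a_i < i`. -/
def ValidCode (v : List ℤ) : Prop :=
  ∀ i : Fin v.length, -((i : ℤ) + 1) < v.get i ∧ v.get i < (i : ℤ) + 1

/-- The OLA distance: the Hamming distance between the OLA encodings. -/
def olaDist (T T' : BTree) : ℕ :=
  ((BTree.olaEncode T).zip (BTree.olaEncode T')).countP fun p => decide (p.1 ≠ p.2)

/-- One-hole contexts, marking the position of a subtree/edge in a tree. -/
inductive Ctx : Type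
  | hole : Ctx
  | left : Ctx → BTree → Ctx
  | right : BTree → Ctx → Ctx
  deriving DecidableEq

/-- Fill the hole of a context with a tree. -/
def Ctx.fill : Ctx → BTree → BTree
  | .hole, T => T
  | .left c r, T => BTree.node (Ctx.fill c T) r
  | .right l c, T => BTree.node l (Ctx.fill c T)

/-- Composition of contexts: `(c.comp d).fill X = c.fill (d.fill X)`. -/
def Ctx.comp : Ctx → Ctx → Ctx
  | .hole, d => d
  | .left c r, d => .left (Ctx.comp c d) r
  | .right l c, d => .right l (Ctx.comp c d)

/-- Equality of ordered binary trees as *unordered* trees (children may be swapped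
at every internal node). -/
def TreeEquiv : BTree → BTree → Prop
  | .leaf i, .leaf j => i = j
  | .node l r, .node l' r' =>
      (TreeEquiv l l' ∧ TreeEquiv r r') ∨ (TreeEquiv l r' ∧ TreeEquiv r l')
  | _, _ => False

/-- `T'` is obtained from `T` by a single NNI move: contract an internal edge
(the edge above the subtree `node A B`) and re-resolve the resulting degree-4
node in one of the two other possible ways (unordered). -/
def IsNNIMove (T T' : BTree) : Prop :=
  ∃ (c : Ctx) (A B C : BTree),
    TreeEquiv T (Ctx.fill c (BTree.node (BTree.node A B) C)) ∧
    TreeEquiv T' (Ctx.fill c (BTree.node (BTree.node A C) B))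

/-- `T'` is obtained from `T` by a single rooted SPR move: prune the subtree `S`
(suppressing the resulting degree-2 node) and regraft it by subdividing an edge
of the remaining tree. -/
def IsSPRMove (T T' : BTree) : Prop :=
  ∃ (S : BTree) (c c' : Ctx) (X Y : BTree),
    TreeEquiv T (Ctx.fill c (BTree.node S X)) ∧
    Ctx.fill c X = Ctx.fill c' Y ∧
    TreeEquiv T' (Ctx.fill c' (BTree.node S Y))

/-- The multiset of canonical labels of the internal nodes of a tree. -/
def internalLabels : BTree → Multiset ℤ
  | .leaf _ => 0
  | .node l r => BTree.nodeLabel (BTree.node l r) ::ₘ (internalLabels l + internalLabels r)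

/-- `prune k T` : delete all leaves with label `≥ k` and suppress the resulting
degree-2 nodes (`none` if no leaf survives). -/
def prune (k : ℕ) : BTree → Option BTree
  | .leaf j => if j < k then some (.leaf j) else none
  | .node l r =>
    match prune k l, prune k r with
    | some l', some r' => some (.node l' r')
    | some l', none => some l'
    | none, some r' => some r'
    | none, none => none

/-!
The OLA encoding is read off by deleting the leaves `n-1, n-2, …, 1` in turn and recording the
label of each deleted leaf's sister. Deleting the largest leaf commutes with the NNI move
`((A,B),C) ↦ ((A,C),B)`. If the leaf lies outside this subtree, the two reduced trees again differ
by the same move and record the same sister label, unless the sister is the subtree itself, which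
is recorded as `-k` in `T`. If it lies strictly inside `A`, `B` or `C`, it is the largest leaf
there, so the clade minima, and with them the label `-k`, do not change. If it is one of `A`, `B`,
`C`, the two reduced trees agree up to swapping children, so all earlier entries coincide. Hence
all mismatches but one sit at entries `-k` of the encoding of `T`.
-/

namespace BTree

variable {i : ℕ} {a : ℤ}

theorem numLeaves_eq_card (T : BTree) : numLeaves T = Multiset.card (leafMultiset T) := by
  induction T with
  | leaf j => rfl
  | node l r ihl ihr => simp [numLeaves, leafMultiset, ihl, ihr]

theorem minLeaf_mem (T : BTree) : minLeaf T ∈ leafMultiset T := by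
  induction T with
  | leaf j => simp [minLeaf, leafMultiset]
  | node l r ihl ihr =>
    rcases min_choice (minLeaf l) (minLeaf r) with h | h <;>
      simp [minLeaf, leafMultiset, h, ihl, ihr]

theorem minLeaf_le {T : BTree} {x : ℕ} (hx : x ∈ leafMultiset T) : minLeaf T ≤ x := by
  induction T with
  | leaf j => simp_all [minLeaf, leafMultiset]
  | node l r ihl ihr =>
    rcases Multiset.mem_add.mp hx with hx | hx
    · exact (min_le_left _ _).trans (ihl hx)
    · exact (min_le_right _ _).trans (ihr hx)

theorem minLeaf_eq_of_leafMultiset_eq {T U : BTree} (h : leafMultiset T = leafMultiset U) :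
    minLeaf T = minLeaf U :=
  le_antisymm (minLeaf_le (h ▸ minLeaf_mem U)) (minLeaf_le (h ▸ minLeaf_mem T))

theorem nodeLabel_node_congr {l r l' r' : BTree} (hl : leafMultiset l = leafMultiset l')
    (hr : leafMultiset r = leafMultiset r') : nodeLabel (node l r) = nodeLabel (node l' r') := by
  simp [nodeLabel, minLeaf_eq_of_leafMultiset_eq hl, minLeaf_eq_of_leafMultiset_eq hr]

theorem nodeLabel_node_comm (l r : BTree) : nodeLabel (node l r) = nodeLabel (node r l) := by
  simp [nodeLabel, max_comm]

theorem ne_leaf_of_notMem {T : BTree} (h : i ∉ leafMultiset T) : T ≠ leaf i := by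
  rintro rfl
  simp [leafMultiset] at h

theorem deleteLeaf_eq_none {T : BTree} (h : i ∉ leafMultiset T) : deleteLeaf i T = none := by
  induction T with
  | leaf j => rfl
  | node l r ihl ihr =>
    simp only [leafMultiset, Multiset.mem_add, not_or] at h
    simp [deleteLeaf, ne_leaf_of_notMem h.1, ne_leaf_of_notMem h.2, ihl h.1, ihr h.2]

theorem mem_of_deleteLeaf_eq_some {T T' : BTree} (h : deleteLeaf i T = some (a, T')) :
    i ∈ leafMultiset T := by
  by_contra hi
  simp [deleteLeaf_eq_none hi] at h

theorem deleteLeaf_node_leaf_left (r : BTree) :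
    deleteLeaf i (node (leaf i) r) = some (nodeLabel r, r) := by
  simp [deleteLeaf]

theorem deleteLeaf_node_leaf_right {l : BTree} (hl : i ∉ leafMultiset l) :
    deleteLeaf i (node l (leaf i)) = some (nodeLabel l, l) := by
  simp [deleteLeaf, ne_leaf_of_notMem hl]

theorem deleteLeaf_node_left {l r l' : BTree} (hr : i ∉ leafMultiset r)
    (h : deleteLeaf i l = some (a, l')) : deleteLeaf i (node l r) = some (a, node l' r) := by
  have hl : l ≠ leaf i := by
    rintro rfl
    simp [deleteLeaf] at h
  simp [deleteLeaf, hl, ne_leaf_of_notMem hr, h]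

theorem deleteLeaf_node_right {l r r' : BTree} (hl : i ∉ leafMultiset l)
    (h : deleteLeaf i r = some (a, r')) : deleteLeaf i (node l r) = some (a, node l r') := by
  have hr : r ≠ leaf i := by
    rintro rfl
    simp [deleteLeaf] at h
  simp [deleteLeaf, ne_leaf_of_notMem hl, hr, deleteLeaf_eq_none hl, h]

theorem exists_deleteLeaf {T : BTree} (hnd : (leafMultiset T).Nodup) (hi : i ∈ leafMultiset T)
    (hT : T ≠ leaf i) : ∃ a T', deleteLeaf i T = some (a, T') := by
  induction T with
  | leaf j => simp_all [leafMultiset]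
  | node l r ihl ihr =>
    obtain ⟨ndl, ndr, hdisj⟩ := Multiset.nodup_add.mp hnd
    rcases Multiset.mem_add.mp hi with hil | hir
    · by_cases hl : l = leaf i
      · exact ⟨_, _, hl ▸ deleteLeaf_node_leaf_left r⟩
      · obtain ⟨a, l', h⟩ := ihl ndl hil hl
        exact ⟨a, _, deleteLeaf_node_left (Multiset.disjoint_left.mp hdisj hil) h⟩
    · by_cases hr : r = leaf i
      · exact ⟨_, _, hr ▸ deleteLeaf_node_leaf_right (Multiset.disjoint_right.mp hdisj hir)⟩
      · obtain ⟨a, r', h⟩ := ihr ndr hir hr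
        exact ⟨a, _, deleteLeaf_node_right (Multiset.disjoint_right.mp hdisj hir) h⟩

theorem leafMultiset_deleteLeaf {T T' : BTree} (h : deleteLeaf i T = some (a, T')) :
    leafMultiset T' = (leafMultiset T).erase i := by
  induction T generalizing a T' with
  | leaf j => simp [deleteLeaf] at h
  | node l r ihl ihr =>
    simp only [deleteLeaf] at h
    split_ifs at h with hl hr
    · cases h
      simp [leafMultiset, hl]
    · cases h
      simp [leafMultiset, hr, Multiset.erase_add_right_pos]
    · rcases hdl : deleteLeaf i l with _ | ⟨a', l'⟩ <;> simp only [hdl] at h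
      · rcases hdr : deleteLeaf i r with _ | ⟨a', r'⟩ <;> simp only [hdr] at h <;> cases h
        simp [leafMultiset, ihr hdr, Multiset.erase_add_right_pos _ (mem_of_deleteLeaf_eq_some hdr)]
      · cases h
        simp [leafMultiset, ihl hdl, Multiset.erase_add_left_pos _ (mem_of_deleteLeaf_eq_some hdl)]

theorem minLeaf_deleteLeaf {T T' : BTree} (h : deleteLeaf i T = some (a, T'))
    (hle : ∀ x ∈ leafMultiset T, x ≤ i) : minLeaf T' = minLeaf T := by
  have hT' := leafMultiset_deleteLeaf h
  have hmem : minLeaf T' ∈ leafMultiset T := Multiset.mem_of_mem_erase (hT' ▸ minLeaf_mem T')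
  refine le_antisymm ?_ (minLeaf_le hmem)
  by_cases hi : minLeaf T = i
  · exact hi ▸ hle _ hmem
  · exact minLeaf_le (hT' ▸ (Multiset.mem_erase_of_ne hi).2 (minLeaf_mem T))

end BTree

namespace TreeEquiv

open BTree

theorem refl : ∀ T : BTree, TreeEquiv T T
  | .leaf _ => rfl
  | .node l r => .inl ⟨refl l, refl r⟩

theorem leafMultiset_eq : ∀ {T U : BTree}, TreeEquiv T U → leafMultiset T = leafMultiset U
  | .leaf _, .leaf _, (h : _ = _) => h ▸ rfl
  | .node _ _, .node _ _, .inl ⟨hl, hr⟩ => by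
    simp [leafMultiset, hl.leafMultiset_eq, hr.leafMultiset_eq]
  | .node _ _, .node _ _, .inr ⟨hl, hr⟩ => by
    simp [leafMultiset, hl.leafMultiset_eq, hr.leafMultiset_eq, add_comm]

theorem nodeLabel_eq : ∀ {T U : BTree}, TreeEquiv T U → nodeLabel T = nodeLabel U
  | .leaf _, .leaf _, (h : _ = _) => h ▸ rfl
  | .node _ _, .node _ _, .inl ⟨hl, hr⟩ =>
    nodeLabel_node_congr hl.leafMultiset_eq hr.leafMultiset_eq
  | .node _ _, .node _ _, .inr ⟨hl, hr⟩ =>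
    (nodeLabel_node_congr hl.leafMultiset_eq hr.leafMultiset_eq).trans (nodeLabel_node_comm _ _)

theorem eq_leaf_iff {T U : BTree} {j : ℕ} (h : TreeEquiv T U) : T = leaf j ↔ U = leaf j := by
  cases T <;> cases U <;> simp_all [TreeEquiv]

theorem deleteLeaf {i : ℕ} : ∀ {T U : BTree}, TreeEquiv T U → (leafMultiset T).Nodup →
    i ∈ leafMultiset T → T ≠ leaf i →
    ∃ a T' U', deleteLeaf i T = some (a, T') ∧ deleteLeaf i U = some (a, U') ∧ TreeEquiv T' U'
  | .leaf _, _, _, _, hi, hT => by simp_all [leafMultiset]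
  | .node l r, .node l' r', h, hnd, hi, _ => by
    obtain ⟨ndl, ndr, hdisj⟩ := Multiset.nodup_add.mp hnd
    rcases Multiset.mem_add.mp hi with hil | hir
    · have hir : i ∉ leafMultiset r := Multiset.disjoint_left.mp hdisj hil
      rcases h with ⟨hl, hr⟩ | ⟨hl, hr⟩
      · have hir' : i ∉ leafMultiset r' := hr.leafMultiset_eq ▸ hir
        by_cases hli : l = leaf i
        · subst hli
          rw [(hl.eq_leaf_iff).1 rfl]
          exact ⟨_, _, _, deleteLeaf_node_leaf_left r,
            hr.nodeLabel_eq ▸ deleteLeaf_node_leaf_left r', hr⟩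
        · obtain ⟨a, l₁, l₁', h₁, h₁', he⟩ := hl.deleteLeaf ndl hil hli
          exact ⟨a, _, _, deleteLeaf_node_left hir h₁, deleteLeaf_node_left hir' h₁',
            .inl ⟨he, hr⟩⟩
      · have hil' : i ∉ leafMultiset l' := hr.leafMultiset_eq ▸ hir
        by_cases hli : l = leaf i
        · subst hli
          rw [(hl.eq_leaf_iff).1 rfl]
          exact ⟨_, _, _, deleteLeaf_node_leaf_left r,
            hr.nodeLabel_eq ▸ deleteLeaf_node_leaf_right hil', hr⟩
        · obtain ⟨a, l₁, r₁', h₁, h₁', he⟩ := hl.deleteLeaf ndl hil hli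
          exact ⟨a, _, _, deleteLeaf_node_left hir h₁, deleteLeaf_node_right hil' h₁',
            .inr ⟨he, hr⟩⟩
    · have hil : i ∉ leafMultiset l := Multiset.disjoint_right.mp hdisj hir
      rcases h with ⟨hl, hr⟩ | ⟨hl, hr⟩
      · have hil' : i ∉ leafMultiset l' := hl.leafMultiset_eq ▸ hil
        by_cases hri : r = leaf i
        · subst hri
          rw [(hr.eq_leaf_iff).1 rfl]
          exact ⟨_, _, _, deleteLeaf_node_leaf_right hil,
            hl.nodeLabel_eq ▸ deleteLeaf_node_leaf_right hil', hl⟩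
        · obtain ⟨a, r₁, r₁', h₁, h₁', he⟩ := hr.deleteLeaf ndr hir hri
          exact ⟨a, _, _, deleteLeaf_node_right hil h₁, deleteLeaf_node_right hil' h₁',
            .inl ⟨hl, he⟩⟩
      · have hir' : i ∉ leafMultiset r' := hl.leafMultiset_eq ▸ hil
        by_cases hri : r = leaf i
        · subst hri
          rw [(hr.eq_leaf_iff).1 rfl]
          exact ⟨_, _, _, deleteLeaf_node_leaf_right hil,
            hl.nodeLabel_eq ▸ deleteLeaf_node_leaf_left r', hl⟩
        · obtain ⟨a, r₁, l₁', h₁, h₁', he⟩ := hr.deleteLeaf ndr hir hri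
          exact ⟨a, _, _, deleteLeaf_node_right hil h₁, deleteLeaf_node_left hir' h₁',
            .inr ⟨hl, he⟩⟩

theorem olaEncodeAux_eq {m : ℕ} {T U : BTree} (h : TreeEquiv T U) (hnd : (leafMultiset T).Nodup) :
    olaEncodeAux m T = olaEncodeAux m U := by
  induction m generalizing T U with
  | zero => rfl
  | succ m ih =>
    by_cases hi : m + 1 ∈ leafMultiset T ∧ T ≠ leaf (m + 1)
    · obtain ⟨a, T', U', hT, hU, h'⟩ := h.deleteLeaf hnd hi.1 hi.2
      have hnd' : (leafMultiset T').Nodup := leafMultiset_deleteLeaf hT ▸ hnd.erase _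
      simp only [olaEncodeAux, hT, hU, ih h' hnd']
    · rw [not_and_or, not_not] at hi
      rcases hi with hi | rfl
      · have hU : m + 1 ∉ leafMultiset U := h.leafMultiset_eq ▸ hi
        simp only [olaEncodeAux, deleteLeaf_eq_none hi, deleteLeaf_eq_none hU]
      · rw [(h.eq_leaf_iff).1 rfl]

end TreeEquiv

namespace Ctx

open BTree

variable {i : ℕ} {a : ℤ}

def leafMultiset : Ctx → Multiset ℕ
  | hole => 0
  | left c r => c.leafMultiset + r.leafMultiset
  | right l c => l.leafMultiset + c.leafMultiset

theorem leafMultiset_fill (c : Ctx) (S : BTree) :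
    (c.fill S).leafMultiset = c.leafMultiset + S.leafMultiset := by
  induction c with
  | hole => simp [fill, leafMultiset]
  | left c r ih => simp only [fill, BTree.leafMultiset, leafMultiset, ih, add_right_comm]
  | right l c ih => simp only [fill, BTree.leafMultiset, leafMultiset, ih, add_assoc]

theorem fill_comp (c d : Ctx) (S : BTree) : (c.comp d).fill S = c.fill (d.fill S) := by
  induction c with
  | hole => rfl
  | left c r ih => simp [comp, fill, ih]
  | right l c ih => simp [comp, fill, ih]

theorem treeEquiv_fill (c : Ctx) {S S' : BTree} (h : TreeEquiv S S') :
    TreeEquiv (c.fill S) (c.fill S') := by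
  induction c with
  | hole => exact h
  | left c r ih => exact .inl ⟨ih, .refl r⟩
  | right l c ih => exact .inl ⟨.refl l, ih⟩

theorem leafMultiset_fill_congr (c : Ctx) {S₁ S₂ : BTree}
    (hS : S₁.leafMultiset = S₂.leafMultiset) :
    (c.fill S₁).leafMultiset = (c.fill S₂).leafMultiset := by
  rw [leafMultiset_fill, leafMultiset_fill, hS]

theorem nodeLabel_fill_eq_or (c : Ctx) {S₁ S₂ : BTree} (hS : S₁.leafMultiset = S₂.leafMultiset) :
    nodeLabel (c.fill S₁) = nodeLabel (c.fill S₂) ∨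
      nodeLabel (c.fill S₁) = nodeLabel S₁ ∧ nodeLabel (c.fill S₂) = nodeLabel S₂ := by
  cases c with
  | hole => exact .inr ⟨rfl, rfl⟩
  | left c r => exact .inl (nodeLabel_node_congr (leafMultiset_fill_congr c hS) rfl)
  | right l c => exact .inl (nodeLabel_node_congr rfl (leafMultiset_fill_congr c hS))

theorem deleteLeaf_fill {S S' : BTree} (h : deleteLeaf i S = some (a, S')) :
    ∀ {c : Ctx}, i ∉ c.leafMultiset → deleteLeaf i (c.fill S) = some (a, c.fill S')
  | hole, _ => h
  | left c r, hc => by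
    simp only [leafMultiset, Multiset.mem_add, not_or] at hc
    exact deleteLeaf_node_left hc.2 (deleteLeaf_fill h hc.1)
  | right l c, hc => by
    simp only [leafMultiset, Multiset.mem_add, not_or] at hc
    exact deleteLeaf_node_right hc.1 (deleteLeaf_fill h hc.2)

theorem deleteLeaf_fill_of_mem {S₁ S₂ : BTree} (hS : S₁.leafMultiset = S₂.leafMultiset) :
    ∀ {c : Ctx}, (c.fill S₁).leafMultiset.Nodup → i ∈ c.leafMultiset →
      ∃ (c' : Ctx) (a₁ a₂ : ℤ), deleteLeaf i (c.fill S₁) = some (a₁, c'.fill S₁) ∧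
        deleteLeaf i (c.fill S₂) = some (a₂, c'.fill S₂) ∧
        (a₁ = a₂ ∨ a₁ = nodeLabel S₁ ∧ a₂ = nodeLabel S₂)
  | hole, _, hi => by simp [leafMultiset] at hi
  | left c r, hnd, hi => by
    obtain ⟨hndc, hndr, hdisj⟩ := Multiset.nodup_add.mp hnd
    rcases Multiset.mem_add.mp hi with hic | hir
    · have hir : i ∉ r.leafMultiset :=
        Multiset.disjoint_left.mp hdisj
          ((leafMultiset_fill c S₁).symm ▸ Multiset.mem_add.2 (.inl hic))
      obtain ⟨c', a₁, a₂, h₁, h₂, ha⟩ := deleteLeaf_fill_of_mem hS hndc hic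
      exact ⟨left c' r, a₁, a₂, deleteLeaf_node_left hir h₁, deleteLeaf_node_left hir h₂, ha⟩
    · have h₁ : i ∉ (c.fill S₁).leafMultiset := Multiset.disjoint_right.mp hdisj hir
      have h₂ : i ∉ (c.fill S₂).leafMultiset := leafMultiset_fill_congr c hS ▸ h₁
      by_cases hr : r = leaf i
      · subst hr
        exact ⟨c, _, _, deleteLeaf_node_leaf_right h₁, deleteLeaf_node_leaf_right h₂,
          nodeLabel_fill_eq_or c hS⟩
      · obtain ⟨a, r', hr'⟩ := exists_deleteLeaf hndr hir hr
        exact ⟨left c r', a, a, deleteLeaf_node_right h₁ hr', deleteLeaf_node_right h₂ hr',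
          .inl rfl⟩
  | right l c, hnd, hi => by
    obtain ⟨hndl, hndc, hdisj⟩ := Multiset.nodup_add.mp hnd
    rcases Multiset.mem_add.mp hi with hil | hic
    · have h₁ : i ∉ (c.fill S₁).leafMultiset := Multiset.disjoint_left.mp hdisj hil
      have h₂ : i ∉ (c.fill S₂).leafMultiset := leafMultiset_fill_congr c hS ▸ h₁
      by_cases hl : l = leaf i
      · subst hl
        exact ⟨c, _, _, deleteLeaf_node_leaf_left _, deleteLeaf_node_leaf_left _,
          nodeLabel_fill_eq_or c hS⟩
      · obtain ⟨a, l', hl'⟩ := exists_deleteLeaf hndl hil hl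
        exact ⟨right l' c, a, a, deleteLeaf_node_left h₁ hl', deleteLeaf_node_left h₂ hl', .inl rfl⟩
    · have hil : i ∉ l.leafMultiset :=
        Multiset.disjoint_right.mp hdisj
          ((leafMultiset_fill c S₁).symm ▸ Multiset.mem_add.2 (.inl hic))
      obtain ⟨c', a₁, a₂, h₁, h₂, ha⟩ := deleteLeaf_fill_of_mem hS hndc hic
      exact ⟨right l c', a₁, a₂, deleteLeaf_node_right hil h₁, deleteLeaf_node_right hil h₂, ha⟩

end Ctx

section

variable {α : Type*} [DecidableEq α]

def mismatchCount (l₁ l₂ : List α) : ℕ :=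
  (l₁.zip l₂).countP fun p => decide (p.1 ≠ p.2)

theorem mismatchCount_self (l : List α) : mismatchCount l l = 0 := by
  induction l with
  | nil => rfl
  | cons x l ih => simpa [mismatchCount] using ih

theorem mismatchCount_append_singleton {l₁ l₂ : List α} (h : l₁.length = l₂.length) (x y : α) :
    mismatchCount (l₁ ++ [x]) (l₂ ++ [y]) = mismatchCount l₁ l₂ + if x = y then 0 else 1 := by
  simp [mismatchCount, List.zip_append h, List.countP_append]

end

open BTree

/-- `T₂` arises from `T₁` by the NNI move `((A,B),C) ↦ ((A,C),B)` taken literally (not up to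
`TreeEquiv`), where the upper endpoint `((A,B),C)` carries the canonical label `κ`. -/
def NNIAt (κ : ℤ) (T₁ T₂ : BTree) : Prop :=
  ∃ (c : Ctx) (A B C : BTree), T₁ = c.fill (node (node A B) C) ∧
    T₂ = c.fill (node (node A C) B) ∧ nodeLabel (node (node A B) C) = κ

namespace NNIAt

variable {κ : ℤ} {T₁ T₂ : BTree}

theorem root {A B C : BTree} (h : nodeLabel (node (node A B) C) = κ) :
    NNIAt κ (node (node A B) C) (node (node A C) B) :=
  ⟨.hole, A, B, C, rfl, rfl, h⟩

theorem fill (h : NNIAt κ T₁ T₂) (c : Ctx) : NNIAt κ (c.fill T₁) (c.fill T₂) := by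
  obtain ⟨d, A, B, C, rfl, rfl, hκ⟩ := h
  exact ⟨c.comp d, A, B, C, (Ctx.fill_comp c d _).symm, (Ctx.fill_comp c d _).symm, hκ⟩

theorem leafMultiset_eq (h : NNIAt κ T₁ T₂) : leafMultiset T₁ = leafMultiset T₂ := by
  obtain ⟨c, A, B, C, rfl, rfl, -⟩ := h
  simp only [Ctx.leafMultiset_fill, BTree.leafMultiset, add_right_comm]

theorem deleteLeaf_root {i : ℕ} {A B C : BTree} (hnd : (leafMultiset (node (node A B) C)).Nodup)
    (hle : ∀ x ∈ leafMultiset (node (node A B) C), x ≤ i)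
    (hi : i ∈ leafMultiset (node (node A B) C)) :
    ∃ x S₁ y S₂, deleteLeaf i (node (node A B) C) = some (x, S₁) ∧
      deleteLeaf i (node (node A C) B) = some (y, S₂) ∧
      (NNIAt (nodeLabel (node (node A B) C)) S₁ S₂ ∧ x = y ∨ TreeEquiv S₁ S₂) := by
  simp only [BTree.leafMultiset, Multiset.nodup_add, Multiset.mem_add] at hnd hle hi
  obtain ⟨⟨ndA, ndB, hAB⟩, ndC, hABC⟩ := hnd
  have hnotC : i ∈ leafMultiset A ∨ i ∈ leafMultiset B → i ∉ leafMultiset C := fun h =>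
    Multiset.disjoint_left.mp hABC (Multiset.mem_add.2 h)
  rcases hi with (hiA | hiB) | hiC
  · have hiB : i ∉ leafMultiset B := Multiset.disjoint_left.mp hAB hiA
    have hiC := hnotC (.inl hiA)
    by_cases hA : A = leaf i
    · subst hA
      exact ⟨_, _, _, _, deleteLeaf_node_left hiC (deleteLeaf_node_leaf_left B),
        deleteLeaf_node_left hiB (deleteLeaf_node_leaf_left C), .inr (.inr ⟨.refl B, .refl C⟩)⟩
    · obtain ⟨x, A', hA'⟩ := exists_deleteLeaf ndA hiA hA
      have hmin := minLeaf_deleteLeaf hA' fun x hx => hle x (.inl (.inl hx))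
      exact ⟨_, _, _, _, deleteLeaf_node_left hiC (deleteLeaf_node_left hiB hA'),
        deleteLeaf_node_left hiB (deleteLeaf_node_left hiC hA'),
        .inl ⟨root (by simp [nodeLabel, minLeaf, hmin]), rfl⟩⟩
  · have hiA : i ∉ leafMultiset A := Multiset.disjoint_right.mp hAB hiB
    have hiC := hnotC (.inr hiB)
    by_cases hB : B = leaf i
    · subst hB
      exact ⟨_, _, _, _, deleteLeaf_node_left hiC (deleteLeaf_node_leaf_right hiA),
        deleteLeaf_node_leaf_right (by simp [BTree.leafMultiset, hiA, hiC]), .inr (.refl _)⟩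
    · obtain ⟨x, B', hB'⟩ := exists_deleteLeaf ndB hiB hB
      have hmin := minLeaf_deleteLeaf hB' fun x hx => hle x (.inl (.inr hx))
      exact ⟨_, _, _, _, deleteLeaf_node_left hiC (deleteLeaf_node_right hiA hB'),
        deleteLeaf_node_right (by simp [BTree.leafMultiset, hiA, hiC]) hB',
        .inl ⟨root (by simp [nodeLabel, minLeaf, hmin]), rfl⟩⟩
  · have hiAB : i ∉ leafMultiset A + leafMultiset B := Multiset.disjoint_right.mp hABC hiC
    simp only [Multiset.mem_add, not_or] at hiAB
    obtain ⟨hiA, hiB⟩ := hiAB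
    by_cases hC : C = leaf i
    · subst hC
      exact ⟨_, _, _, _, deleteLeaf_node_leaf_right (by simp [BTree.leafMultiset, hiA, hiB]),
        deleteLeaf_node_left hiB (deleteLeaf_node_leaf_right hiA), .inr (.refl _)⟩
    · obtain ⟨x, C', hC'⟩ := exists_deleteLeaf ndC hiC hC
      have hmin := minLeaf_deleteLeaf hC' fun x hx => hle x (.inr hx)
      exact ⟨_, _, _, _, deleteLeaf_node_right (by simp [BTree.leafMultiset, hiA, hiB]) hC',
        deleteLeaf_node_left hiB (deleteLeaf_node_right hiA hC'),
        .inl ⟨root (by simp [nodeLabel, minLeaf, hmin]), rfl⟩⟩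

theorem deleteLeaf {i : ℕ} (h : NNIAt κ T₁ T₂) (hnd : (leafMultiset T₁).Nodup)
    (hle : ∀ x ∈ leafMultiset T₁, x ≤ i) (hi : i ∈ leafMultiset T₁) :
    ∃ x T₁' y T₂', deleteLeaf i T₁ = some (x, T₁') ∧ deleteLeaf i T₂ = some (y, T₂') ∧
      (NNIAt κ T₁' T₂' ∧ (x = y ∨ x = κ) ∨ TreeEquiv T₁' T₂') := by
  obtain ⟨c, A, B, C, rfl, rfl, hκ⟩ := h
  have hsplit := hnd
  rw [Ctx.leafMultiset_fill] at hsplit hi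
  obtain ⟨-, hndS, hdisj⟩ := Multiset.nodup_add.mp hsplit
  rcases Multiset.mem_add.mp hi with hic | hiS
  · obtain ⟨c', x, y, h₁, h₂, hxy⟩ :=
      Ctx.deleteLeaf_fill_of_mem (root rfl).leafMultiset_eq hnd hic
    exact ⟨_, _, _, _, h₁, h₂, .inl ⟨⟨c', A, B, C, rfl, rfl, hκ⟩, hxy.imp_right (·.1.trans hκ)⟩⟩
  · have hic : i ∉ c.leafMultiset := Multiset.disjoint_right.mp hdisj hiS
    have hleS : ∀ x ∈ leafMultiset (node (node A B) C), x ≤ i := fun x hx =>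
      hle x (by rw [Ctx.leafMultiset_fill]; exact Multiset.mem_add.2 (.inr hx))
    obtain ⟨x, S₁, y, S₂, h₁, h₂, hS⟩ := deleteLeaf_root hndS hleS hiS
    refine ⟨x, c.fill S₁, y, c.fill S₂, Ctx.deleteLeaf_fill h₁ hic, Ctx.deleteLeaf_fill h₂ hic, ?_⟩
    rcases hS with ⟨hS, rfl⟩ | hS
    · exact .inl ⟨hκ ▸ hS.fill c, .inl rfl⟩
    · exact .inr (Ctx.treeEquiv_fill c hS)

/-- The length equality is carried along because `mismatchCount` only splits over `++` when the
prefixes have equal length. -/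
theorem length_olaEncodeAux_eq_and_mismatchCount_le {m : ℕ} (h : NNIAt κ T₁ T₂)
    (hnd : (leafMultiset T₁).Nodup)
    (hle : ∀ x ∈ leafMultiset T₁, x ≤ m) :
    (olaEncodeAux m T₁).length = (olaEncodeAux m T₂).length ∧
      mismatchCount (olaEncodeAux m T₁) (olaEncodeAux m T₂) ≤ 1 + (olaEncodeAux m T₁).count κ := by
  induction m generalizing T₁ T₂ with
  | zero => simp [BTree.olaEncodeAux, mismatchCount]
  | succ m ih =>
    by_cases hi : m + 1 ∈ leafMultiset T₁
    · obtain ⟨x, T₁', y, T₂', h₁, h₂, hstep⟩ := h.deleteLeaf hnd hle hi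
      have hT₁' := leafMultiset_deleteLeaf h₁
      have hnd' : (leafMultiset T₁').Nodup := hT₁' ▸ hnd.erase _
      have hle' : ∀ x ∈ leafMultiset T₁', x ≤ m := fun x hx => by
        rw [hT₁', hnd.mem_erase_iff] at hx
        have := hle x hx.2
        omega
      simp only [BTree.olaEncodeAux, h₁, h₂, List.length_append, List.count_append]
      rcases hstep with ⟨hnni, hxy⟩ | hequiv
      · obtain ⟨hlen, hbound⟩ := ih hnni hnd' hle'
        rw [mismatchCount_append_singleton hlen]
        have hlast : (if x = y then 0 else 1) ≤ [x].count κ := by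
          rcases hxy with rfl | rfl <;> split_ifs <;> simp_all
        exact ⟨by simp [hlen], by omega⟩
      · rw [← hequiv.olaEncodeAux_eq hnd', mismatchCount_append_singleton rfl, mismatchCount_self]
        refine ⟨rfl, ?_⟩
        split_ifs <;> omega
    · have hi₂ : m + 1 ∉ leafMultiset T₂ := h.leafMultiset_eq ▸ hi
      simp [BTree.olaEncodeAux, deleteLeaf_eq_none hi, deleteLeaf_eq_none hi₂, mismatchCount]

end NNIAt

theorem olaEncode_eq_olaEncodeAux_of_treeEquiv {n : ℕ} {T U : BTree}
    (hT : leafMultiset T = Multiset.range n) (h : TreeEquiv T U) :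
    olaEncode T = olaEncodeAux (n - 1) U := by
  rw [olaEncode, numLeaves_eq_card, hT, Multiset.card_range]
  exact h.olaEncodeAux_eq (hT ▸ Multiset.nodup_range n)

theorem nni_swapped_upper_label_dist_bound_general (n k : ℕ) (T T' : BTree)
    (hT : BTree.IsRBT n T)
    (c : Ctx) (A B C : BTree)
    (hfill : TreeEquiv T (Ctx.fill c (BTree.node (BTree.node A B) C)))
    (hfill' : TreeEquiv T' (Ctx.fill c (BTree.node (BTree.node A C) B)))
    (hupper : BTree.nodeLabel (BTree.node (BTree.node A B) C) = -(k : ℤ)) :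
    olaDist T T' ≤ 1 + (BTree.olaEncode T).count (-(k : ℤ)) := by
  have hnni : NNIAt (-k) (c.fill (node (node A B) C)) (c.fill (node (node A C) B)) :=
    (NNIAt.root hupper).fill c
  have hleaves : leafMultiset (c.fill (node (node A B) C)) = Multiset.range n :=
    hfill.leafMultiset_eq ▸ hT.2
  have hleaves' : leafMultiset T' = Multiset.range n := by
    rw [hfill'.leafMultiset_eq, ← hnni.leafMultiset_eq, hleaves]
  have hle : ∀ x ∈ leafMultiset (c.fill (node (node A B) C)), x ≤ n - 1 := fun x hx => by
    have := Multiset.mem_range.mp (hleaves ▸ hx)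
    omega
  change mismatchCount (olaEncode T) (olaEncode T') ≤ _
  rw [olaEncode_eq_olaEncodeAux_of_treeEquiv hT.2 hfill,
    olaEncode_eq_olaEncodeAux_of_treeEquiv hleaves' hfill']
  exact (hnni.length_olaEncodeAux_eq_and_mismatchCount_le (hleaves ▸ Multiset.nodup_range n) hle).2

/-- Let `T` be a leaf-ordered rooted binary tree on `n` leaves and
let `e` be the internal edge between the node `(A,B)` (lower endpoint, canonical
label `-j`) and the node `((A,B),C)` (upper endpoint, canonical label `-k`), sitting
in a context `c`.  If `T'` is obtained from `T` by the NNI move across `e` turning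
`((A,B),C)` into `((A,C),B)` and in `T'` the upper endpoint of the modified edge has
canonical label `-j` instead of `-k`, then `d_OLA(T, T') ≤ 1 + c_k`, where `c_k` is
the number of entries equal to `-k` in the OLA encoding of `T`. -/
theorem nni_swapped_upper_label_dist_bound (n j k : ℕ) (T T' : BTree)
    (hT : BTree.IsRBT n T) (hT' : BTree.IsRBT n T')
    (c : Ctx) (A B C : BTree)
    (hfill : TreeEquiv T (Ctx.fill c (BTree.node (BTree.node A B) C)))
    (hfill' : TreeEquiv T' (Ctx.fill c (BTree.node (BTree.node A C) B)))
    (hupper : BTree.nodeLabel (BTree.node (BTree.node A B) C) = -(k : ℤ))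
    (hlower : BTree.nodeLabel (BTree.node A B) = -(j : ℤ))
    (hupper' : BTree.nodeLabel (BTree.node (BTree.node A C) B) = -(j : ℤ)) :
    olaDist T T' ≤ 1 + (BTree.olaEncode T).count (-(k : ℤ)) :=
  nni_swapped_upper_label_dist_bound_general n k T T' hT c A B C hfill hfill' hupper
end

section
/- For every n ≥ 3, there exist leaf-ordered rooted binary trees T and T′ on n leaves that differ by a single rooted SPR move and have maximal OLA distance d_OLA(T, T′) = n − 2; specifically, the caterpillar tree with OLA encoding (0, 0, 0, ..., 0) and the caterpillar tree with OLA encoding (0, 1, 2, ..., n−2) differ by a single SPR move (pruning the subtree consisting of leaf 0 and regrafting it at the edge above the root's other child), and their encodings differ in all n − 2 entries after the first. -/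
/-! The first tree is the caterpillar `(((0, n-1), n-2), …, 1)`: deleting its leaves from the
top label down, every deleted leaf is a sister of leaf `0`, so its code is `(0, …, 0)`. The
second is the comb `(0, (1, …, (n-2, n-1)))`, where leaf `i` is always the sister of leaf
`i - 1`, so its code is `(0, 1, …, n-2)`. Pruning leaf `0` from the caterpillar leaves the
mirror image of the comb `(1, …, (n-2, n-1))`, and regrafting leaf `0` above the root gives
the comb. The two codes agree only in their first entry. -/

theorem TreeEquiv.refl_s10 : ∀ t : BTree, TreeEquiv t t
  | .leaf _ => rfl
  | .node l r => Or.inl ⟨TreeEquiv.refl_s10 l, TreeEquiv.refl_s10 r⟩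

theorem isSPRMove_of_regraft_at_root {T T' S X : BTree} (c : Ctx)
    (hT : TreeEquiv T (c.fill (.node S X))) (hT' : TreeEquiv T' (.node S (c.fill X))) :
    IsSPRMove T T' :=
  ⟨S, c, .hole, X, c.fill X, hT, rfl, hT'⟩

namespace BTree

theorem card_leafMultiset : ∀ T : BTree, Multiset.card (leafMultiset T) = numLeaves T
  | leaf _ => rfl
  | node l r => by simp [leafMultiset, numLeaves, card_leafMultiset l, card_leafMultiset r]

theorem IsRBT.olaEncode_eq {n : ℕ} {T : BTree} (hT : IsRBT n T) :
    olaEncode T = olaEncodeAux (n - 1) T := by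
  rw [olaEncode, ← card_leafMultiset, hT.2, Multiset.card_range]

def zeroCaterpillar (s : ℕ) : ℕ → BTree
  | 0 => leaf 0
  | m + 1 => node (zeroCaterpillar (s + 1) m) (leaf s)

def rightComb (s : ℕ) : ℕ → BTree
  | 0 => leaf s
  | m + 1 => node (leaf s) (rightComb (s + 1) m)

theorem minLeaf_zeroCaterpillar (s m : ℕ) : minLeaf (zeroCaterpillar s m) = 0 := by
  induction m generalizing s with
  | zero => rfl
  | succ m ih => simp [zeroCaterpillar, minLeaf, ih]

theorem minLeaf_rightComb (s m : ℕ) : minLeaf (rightComb s m) = s := by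
  induction m generalizing s with
  | zero => rfl
  | succ m ih => simp [rightComb, minLeaf, ih]

theorem canonical_zeroCaterpillar {s : ℕ} (hs : 0 < s) (m : ℕ) :
    Canonical (zeroCaterpillar s m) := by
  induction m generalizing s with
  | zero => trivial
  | succ m ih =>
    exact ⟨by simpa [minLeaf_zeroCaterpillar, minLeaf] using hs, ih (by omega), trivial⟩

theorem canonical_rightComb (s m : ℕ) : Canonical (rightComb s m) := by
  induction m generalizing s with
  | zero => trivial
  | succ m ih => exact ⟨by simp [minLeaf_rightComb, minLeaf], trivial, ih (s + 1)⟩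

theorem leafMultiset_zeroCaterpillar (s m : ℕ) :
    leafMultiset (zeroCaterpillar s m) = 0 ::ₘ (List.range' s m : Multiset ℕ) := by
  induction m generalizing s with
  | zero => rfl
  | succ m ih =>
    rw [zeroCaterpillar, leafMultiset, ih, List.range'_succ, ← Multiset.cons_coe,
      Multiset.cons_swap, ← Multiset.singleton_add s, add_comm]
    rfl

theorem leafMultiset_rightComb (s m : ℕ) :
    leafMultiset (rightComb s m) = (List.range' s (m + 1) : Multiset ℕ) := by
  induction m generalizing s with
  | zero => rfl
  | succ m ih =>
    rw [rightComb, leafMultiset, ih, List.range'_succ (s := s), ← Multiset.cons_coe,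
      ← Multiset.singleton_add]
    rfl

theorem isRBT_zeroCaterpillar (m : ℕ) : IsRBT (m + 1) (zeroCaterpillar 1 m) := by
  refine ⟨canonical_zeroCaterpillar one_pos m, ?_⟩
  rw [leafMultiset_zeroCaterpillar, Multiset.range, List.range_eq_range', List.range'_succ]
  rfl

theorem isRBT_rightComb (m : ℕ) : IsRBT (m + 1) (rightComb 0 m) :=
  ⟨canonical_rightComb 0 m, by
    rw [leafMultiset_rightComb, ← List.range_eq_range', Multiset.range]⟩

theorem deleteLeaf_zeroCaterpillar {s : ℕ} (hs : 0 < s) (m : ℕ) :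
    deleteLeaf (s + m) (zeroCaterpillar s (m + 1)) = some (0, zeroCaterpillar s m) := by
  induction m generalizing s with
  | zero => simp [zeroCaterpillar, deleteLeaf, nodeLabel, hs.ne]
  | succ m ih =>
    have hdel := ih (Nat.succ_pos s)
    rw [show s + 1 + m = s + (m + 1) by omega] at hdel
    rw [zeroCaterpillar, deleteLeaf, if_neg (by simp [zeroCaterpillar]),
      if_neg (by simp), hdel]
    rfl

theorem deleteLeaf_rightComb (s m : ℕ) :
    deleteLeaf (s + m + 1) (rightComb s (m + 1)) = some (((s + m : ℕ) : ℤ), rightComb s m) := by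
  induction m generalizing s with
  | zero => simp [rightComb, deleteLeaf, nodeLabel]
  | succ m ih =>
    have hdel := ih (s + 1)
    rw [show s + 1 + m = s + (m + 1) by omega] at hdel
    rw [rightComb, deleteLeaf, if_neg (by simp; omega), if_neg (by simp [rightComb]),
      deleteLeaf, hdel]
    push_cast
    rfl

theorem olaEncode_zeroCaterpillar (m : ℕ) :
    olaEncode (zeroCaterpillar 1 m) = List.replicate m 0 := by
  rw [(isRBT_zeroCaterpillar m).olaEncode_eq, Nat.add_sub_cancel]
  induction m with
  | zero => rfl
  | succ m ih =>
    have hdel := deleteLeaf_zeroCaterpillar one_pos m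
    rw [Nat.add_comm 1 m] at hdel
    rw [olaEncodeAux, hdel]
    simp only [ih, List.replicate_succ']

theorem olaEncode_rightComb (m : ℕ) :
    olaEncode (rightComb 0 m) = List.ofFn fun i : Fin m => (i : ℤ) := by
  rw [(isRBT_rightComb m).olaEncode_eq, Nat.add_sub_cancel]
  induction m with
  | zero => rfl
  | succ m ih =>
    have hdel := deleteLeaf_rightComb 0 m
    rw [zero_add] at hdel
    rw [olaEncodeAux, hdel]
    simp only [ih, List.ofFn_succ_last]
    simp

def zeroCaterpillarCtx (s : ℕ) : ℕ → Ctx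
  | 0 => .hole
  | m + 1 => .left (zeroCaterpillarCtx (s + 1) m) (leaf s)

theorem fill_zeroCaterpillarCtx (s m : ℕ) :
    (zeroCaterpillarCtx s m).fill (node (leaf 0) (leaf (s + m))) = zeroCaterpillar s (m + 1) := by
  induction m generalizing s with
  | zero => rfl
  | succ m ih =>
    rw [zeroCaterpillarCtx, Ctx.fill, show s + (m + 1) = s + 1 + m by omega, ih]
    rfl

theorem treeEquiv_rightComb_fill_zeroCaterpillarCtx (s m : ℕ) :
    TreeEquiv (rightComb s m) ((zeroCaterpillarCtx s m).fill (leaf (s + m))) := by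
  induction m generalizing s with
  | zero => rfl
  | succ m ih =>
    rw [show s + (m + 1) = s + 1 + m by omega]
    exact Or.inr ⟨rfl, ih (s + 1)⟩

theorem isSPRMove_zeroCaterpillar_rightComb (m : ℕ) :
    IsSPRMove (zeroCaterpillar 1 (m + 1)) (rightComb 0 (m + 1)) := by
  refine isSPRMove_of_regraft_at_root (S := leaf 0) (X := leaf (1 + m))
    (zeroCaterpillarCtx 1 m) ?_ (Or.inl ⟨rfl, treeEquiv_rightComb_fill_zeroCaterpillarCtx 1 m⟩)
  rw [fill_zeroCaterpillarCtx]
  exact TreeEquiv.refl_s10 _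

end BTree

theorem countP_ne_zip_replicate_zero_ofFn (m : ℕ) :
    ((List.replicate m (0 : ℤ)).zip (List.ofFn fun i : Fin m => (i : ℤ))).countP
      (fun p => decide (p.1 ≠ p.2)) = m - 1 := by
  cases m with
  | zero => rfl
  | succ m =>
    rw [List.replicate_succ, List.ofFn_succ, List.zip_cons_cons, List.countP_cons,
      List.countP_eq_length.mpr]
    · simp
    · intro p hp
      obtain ⟨hp₁, hp₂⟩ := List.of_mem_zip hp
      obtain ⟨i, hi⟩ := List.mem_ofFn.mp hp₂
      simp [List.eq_of_mem_replicate hp₁, ← hi]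
      omega

open BTree in
/-- For every `n ≥ 3` there exist leaf-ordered rooted binary trees
`T, T'` on `n` leaves that differ by a single rooted SPR move and attain the maximal
OLA distance `d_OLA(T, T') = n - 2`: specifically the caterpillar tree with OLA
encoding `(0, 0, ..., 0)` and the caterpillar tree with OLA encoding
`(0, 1, 2, ..., n-2)`, whose encodings differ in all `n - 2` entries after the
first. -/
theorem exists_spr_neighbors_max_ola_dist (n : ℕ) (hn : 3 ≤ n) :
    ∃ T T' : BTree, BTree.IsRBT n T ∧ BTree.IsRBT n T' ∧ IsSPRMove T T' ∧
      BTree.olaEncode T = List.replicate (n - 1) (0 : ℤ) ∧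
      BTree.olaEncode T' = List.ofFn (fun i : Fin (n - 1) => (i : ℤ)) ∧
      olaDist T T' = n - 2 := by
  obtain ⟨m, rfl⟩ : ∃ m, n = m + 2 := ⟨n - 2, by omega⟩
  refine ⟨zeroCaterpillar 1 (m + 1), rightComb 0 (m + 1), isRBT_zeroCaterpillar _,
    isRBT_rightComb _, isSPRMove_zeroCaterpillar_rightComb m, olaEncode_zeroCaterpillar _,
    olaEncode_rightComb _, ?_⟩
  rw [olaDist, olaEncode_zeroCaterpillar, olaEncode_rightComb]
  exact countP_ne_zip_replicate_zero_ofFn (m + 1)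
end
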